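/- arXiv:1205.2536 — 4 statements merged into one kernel-verified Lean document; each statement's English description precedes it below -/
import Mathlib

section
/- In the linear Gaussian structural equation model X = BX + N with Cov(N) = σ² I and acyclic B, every variable X_j has variance at least σ², and a variable X_j has variance exactly σ² if and only if the j-th row of B is zero (i.e., j has no parents). Hence min_j Var(X_j) = σ² if at least one vertex has no parents, which always holds by acyclicity. -/
open Matrix Finset

lemma pow_entry_nonneg {p : ℕ} {A : Matrix (Fin p) (Fin p) ℝ}
    (hA : ∀ j k, 0 ≤ A j k) (n : ℕ) : ∀ j k, 0 ≤ (A ^ n) j k := by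
  induction n with
  | zero =>
    intro j k
    simp only [pow_zero, Matrix.one_apply]
    split <;> norm_num
  | succ n ih =>
    intro j k
    rw [pow_succ, Matrix.mul_apply]
    exact Finset.sum_nonneg fun l _ => mul_nonneg (ih j l) (hA l k)

lemma pow_support_zero {p : ℕ} {A B : Matrix (Fin p) (Fin p) ℝ}
    (hA : ∀ j k, 0 ≤ A j k) (h : ∀ j k, A j k = 0 → B j k = 0) (n : ℕ) :
    ∀ j k, (A ^ n) j k = 0 → (B ^ n) j k = 0 := by
  induction n with
  | zero => intro j k hjk; simpa using hjk
  | succ n ih =>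
    intro j k hjk
    rw [pow_succ', Matrix.mul_apply] at hjk
    rw [pow_succ', Matrix.mul_apply]
    refine Finset.sum_eq_zero fun l _ => ?_
    have hterm := (Finset.sum_eq_zero_iff_of_nonneg
      (fun l _ => mul_nonneg (hA j l) (pow_entry_nonneg hA n l k))).mp hjk l (mem_univ l)
    rcases mul_eq_zero.mp hterm with h1 | h2
    · rw [h j l h1, zero_mul]
    · rw [ih l k h2, mul_zero]

lemma diag_sq_le {p : ℕ} {A : Matrix (Fin p) (Fin p) ℝ}
    (hA : ∀ j k, 0 ≤ A j k) (n : ℕ) (j : Fin p) (k : ℕ) :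
    ((A ^ n) j j) ^ k ≤ (A ^ (n * k)) j j := by
  induction k with
  | zero => simp
  | succ k ih =>
    have hnk : A ^ (n * (k + 1)) = A ^ (n * k) * A ^ n := by
      rw [show n * (k + 1) = n * k + n by ring, pow_add]
    rw [hnk, Matrix.mul_apply, pow_succ]
    calc ((A ^ n) j j) ^ k * (A ^ n) j j
        ≤ (A ^ (n * k)) j j * (A ^ n) j j :=
          mul_le_mul_of_nonneg_right ih (pow_entry_nonneg hA n j j)
      _ ≤ ∑ l, (A ^ (n * k)) j l * (A ^ n) l j :=
          Finset.single_le_sum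
            (fun l _ => mul_nonneg (pow_entry_nonneg hA _ j l) (pow_entry_nonneg hA n l j))
            (mem_univ j)

lemma diag_pow_eq_zero {p : ℕ} {A : Matrix (Fin p) (Fin p) ℝ}
    (hA : ∀ j k, 0 ≤ A j k) {m : ℕ} (hm : A ^ m = 0) {n : ℕ} (hn : n ≠ 0) (j : Fin p) :
    (A ^ n) j j = 0 := by
  by_contra hx
  have hx' : 0 < (A ^ n) j j := lt_of_le_of_ne (pow_entry_nonneg hA n j j) (Ne.symm hx)
  have h1 : ((A ^ n) j j) ^ m ≤ (A ^ (n * m)) j j := diag_sq_le hA n j m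
  have h2 : A ^ (n * m) = 0 := by
    rw [mul_comm, pow_mul, hm, zero_pow hn]
  rw [h2] at h1
  simp only [Matrix.zero_apply] at h1
  exact absurd h1 (not_le.mpr (pow_pos hx' m))

/-- In the linear Gaussian SEM `X = BX + N` with `Cov(N) = σ² I` and acyclic
`B`, the covariance of `X` is `Σ = σ² (I-B)⁻¹ (I-B)⁻ᵀ`. Every variable has
variance `Σ j j ≥ σ²`, with equality iff the `j`-th row of `B` is zero (no
parents); moreover some vertex has no parents, so the minimum of
the variances is exactly `σ²`. -/
theorem variance_min_of_equal_error_sem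
    (p : ℕ) (hp : 0 < p) (B : Matrix (Fin p) (Fin p) ℝ)
    (hAdj : IsNilpotent (Matrix.of fun j k => if B j k ≠ 0 then (1 : ℝ) else 0))
    (σ2 : ℝ) (hσ2 : 0 < σ2)
    (Sig : Matrix (Fin p) (Fin p) ℝ)
    (hSig : Sig = σ2 • ((1 - B)⁻¹ * ((1 - B)⁻¹)ᵀ)) :
    (∀ j, σ2 ≤ Sig j j) ∧
    (∀ j, Sig j j = σ2 ↔ ∀ k, B j k = 0) ∧
    (∃ j, ∀ k, B j k = 0) ∧
    IsLeast {x | ∃ j, Sig j j = x} σ2 := by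
  set A : Matrix (Fin p) (Fin p) ℝ :=
    Matrix.of fun j k => if B j k ≠ 0 then (1 : ℝ) else 0 with hAdef
  have hA0 : ∀ j k, 0 ≤ A j k := by
    intro j k; simp only [hAdef, Matrix.of_apply]; split <;> norm_num
  have hsupp : ∀ j k, A j k = 0 → B j k = 0 := by
    intro j k h
    simp only [hAdef, Matrix.of_apply] at h
    by_contra hB
    rw [if_pos hB] at h
    norm_num at h
  obtain ⟨m, hm⟩ := hAdj
  set n := m + 1 with hndef
  have hn : A ^ n = 0 := by rw [hndef, pow_succ, hm, zero_mul]
  -- S is the geometric series, the inverse of (1 - B)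
  set S : Matrix (Fin p) (Fin p) ℝ := ∑ i ∈ Finset.range n, B ^ i with hSdef
  have htel : ∀ C : Matrix (Fin p) (Fin p) ℝ, (∑ i ∈ Finset.range n, (B ^ i - B ^ (i + 1))) = 1 - B ^ n :=
    fun _ => by rw [Finset.sum_range_sub' (fun i => B ^ i)]; simp
  have hBn : B ^ n = 0 := by
    ext j k
    exact pow_support_zero hA0 hsupp n j k (by rw [hn]; rfl)
  have hCS : (1 - B) * S = 1 := by
    have : (1 - B) * S = ∑ i ∈ Finset.range n, (B ^ i - B ^ (i + 1)) := by
      rw [hSdef, Finset.mul_sum]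
      refine Finset.sum_congr rfl fun i _ => ?_
      rw [sub_mul, one_mul, ← pow_succ']
    rw [this, Finset.sum_range_sub' (fun i => B ^ i), pow_zero, hBn, sub_zero]
  have hSC : S * (1 - B) = 1 := by
    have : S * (1 - B) = ∑ i ∈ Finset.range n, (B ^ i - B ^ (i + 1)) := by
      rw [hSdef, Finset.sum_mul]
      refine Finset.sum_congr rfl fun i _ => ?_
      rw [mul_sub, mul_one, ← pow_succ]
    rw [this, Finset.sum_range_sub' (fun i => B ^ i), pow_zero, hBn, sub_zero]
  have hMinv : (1 - B)⁻¹ = S := Matrix.inv_eq_right_inv hCS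
  have hSentry : ∀ j k, S j k = ∑ i ∈ Finset.range n, (B ^ i) j k := by
    intro j k
    rw [hSdef]
    simp [Matrix.sum_apply]
  have hBi_diag : ∀ i, i ≠ 0 → ∀ j : Fin p, (B ^ i) j j = 0 := by
    intro i hi j
    exact pow_support_zero hA0 hsupp i j j (diag_pow_eq_zero hA0 hn hi j)
  have hSdiag : ∀ j, S j j = 1 := by
    intro j
    rw [hSentry]
    rw [Finset.sum_eq_single 0 (fun i _ hi => hBi_diag i hi j)
      (fun h => absurd (Finset.mem_range.mpr (Nat.succ_pos m)) h)]
    simp [Matrix.one_apply]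
  -- row characterization
  have hrow_mp : ∀ j, (∀ k, B j k = 0) → ∀ k, S j k = (1 : Matrix (Fin p) (Fin p) ℝ) j k := by
    intro j hj k
    have hBi : ∀ i, i ≠ 0 → (B ^ i) j k = 0 := by
      intro i hi
      obtain ⟨i', rfl⟩ := Nat.exists_eq_succ_of_ne_zero hi
      rw [pow_succ', Matrix.mul_apply]
      exact Finset.sum_eq_zero fun l _ => by rw [hj l, zero_mul]
    rw [hSentry]
    rw [Finset.sum_eq_single 0 (fun i _ hi => hBi i hi)
      (fun h => absurd (Finset.mem_range.mpr (Nat.succ_pos m)) h)]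
    simp
  have hrow_mpr : ∀ j, (∀ k, S j k = (1 : Matrix (Fin p) (Fin p) ℝ) j k) → ∀ k, B j k = 0 := by
    intro j hj k
    have h1 : (S * (1 - B)) j k = (1 : Matrix (Fin p) (Fin p) ℝ) j k := by rw [hSC]
    rw [Matrix.mul_apply] at h1
    have h2 : ∀ l, S j l * (1 - B) l k = (if j = l then (1 - B) l k else 0) := by
      intro l
      rw [hj l, Matrix.one_apply]
      split <;> simp
    rw [Finset.sum_congr rfl (fun l _ => h2 l), Finset.sum_ite_eq _ j _] at h1
    simp only [Finset.mem_univ, if_true] at h1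
    simpa [Matrix.sub_apply] using h1
  -- diagonal of Sig
  have hdiagSig : ∀ j, Sig j j = σ2 * ∑ k, (S j k) ^ 2 := by
    intro j
    rw [hSig, hMinv]
    simp [Matrix.mul_apply, Matrix.smul_apply, Matrix.transpose_apply, sq]
  have hsum_ge : ∀ j, 1 ≤ ∑ k, (S j k) ^ 2 := by
    intro j
    calc (1 : ℝ) = (S j j) ^ 2 := by rw [hSdiag]; norm_num
      _ ≤ ∑ k, (S j k) ^ 2 :=
        Finset.single_le_sum (f := fun k => (S j k) ^ 2) (fun k _ => sq_nonneg _)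
          (Finset.mem_univ j)
  have part1 : ∀ j, σ2 ≤ Sig j j := by
    intro j
    rw [hdiagSig]
    exact le_mul_of_one_le_right hσ2.le (hsum_ge j)
  have part2 : ∀ j, Sig j j = σ2 ↔ ∀ k, B j k = 0 := by
    intro j
    constructor
    · intro hj
      apply hrow_mpr
      rw [hdiagSig] at hj
      have hsum : ∑ k, (S j k) ^ 2 = 1 := by
        have h' : σ2 * ∑ k, (S j k) ^ 2 = σ2 * 1 := by rw [mul_one]; exact hj
        exact mul_left_cancel₀ (ne_of_gt hσ2) h'
      have herase : ∑ k ∈ Finset.univ.erase j, (S j k) ^ 2 = 0 := by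
        have h0 : (S j j) ^ 2 + ∑ k ∈ Finset.univ.erase j, (S j k) ^ 2
            = ∑ k, (S j k) ^ 2 :=
          Finset.add_sum_erase Finset.univ (fun k => (S j k) ^ 2) (Finset.mem_univ j)
        rw [hsum, hSdiag] at h0
        linarith [h0]
      intro k
      by_cases hk : k = j
      · subst hk; rw [hSdiag, Matrix.one_apply_eq]
      · have := (Finset.sum_eq_zero_iff_of_nonneg (fun k _ => sq_nonneg (S j k))).mp herase k
          (Finset.mem_erase.mpr ⟨hk, Finset.mem_univ k⟩)
        rw [pow_eq_zero_iff (by norm_num : 2 ≠ 0)] at this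
        rw [this, Matrix.one_apply_ne (fun h => hk h.symm)]
    · intro hj
      rw [hdiagSig]
      have : ∀ k, (S j k) ^ 2 = if j = k then (1:ℝ) else 0 := by
        intro k
        rw [hrow_mp j hj k, Matrix.one_apply]
        split <;> norm_num
      rw [Finset.sum_congr rfl (fun k _ => this k), Finset.sum_ite_eq _ j _]
      simp
  have part3 : ∃ j, ∀ k, B j k = 0 := by
    by_contra h
    push_neg at h
    choose f hf using h
    have hAf : ∀ j, A j (f j) = 1 := fun j => by
      simp only [hAdef, Matrix.of_apply, if_pos (hf j)]
    have hpos : ∀ i j, 0 < (A ^ i) j (f^[i] j) := by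
      intro i
      induction i with
      | zero => intro j; simp [Matrix.one_apply]
      | succ i ih =>
        intro j
        rw [Function.iterate_succ_apply, pow_succ', Matrix.mul_apply]
        have h1 : (0:ℝ) < A j (f j) * (A ^ i) (f j) (f^[i] (f j)) := by
          rw [hAf j, one_mul]; exact ih (f j)
        refine lt_of_lt_of_le h1 (Finset.single_le_sum
          (f := fun l => A j l * (A ^ i) l (f^[i] (f j)))
          (fun l _ => mul_nonneg (hA0 j l) (pow_entry_nonneg hA0 i l _))
          (Finset.mem_univ (f j)))
    have := hpos n ⟨0, hp⟩
    rw [hn] at this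
    simp at this
  refine ⟨part1, part2, part3, ?_⟩
  constructor
  · obtain ⟨j0, hj0⟩ := part3
    exact ⟨j0, (part2 j0).mpr hj0⟩
  · rintro x ⟨j, rfl⟩
    exact part1 j
end

section
/- Let X = (I−B)⁻¹N with B having acyclic support, and fix a vertex j. If S is any set of indices consisting only of non-descendants of j in the graph of B, then the noise variable N_j is independent of the subvector X_S. -/
open Matrix MeasureTheory ProbabilityTheory

/-!
The column `(1 - B)⁻¹ e_j` is supported on the descendants of `j`: the vectors supported there
form a subspace invariant under `1 - B`, hence under its inverse. So every `X_s` with `s` a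
non-descendant of `j` is a linear combination of the noise variables other than `N_j`.
-/

namespace Matrix

variable {n : Type*}

theorem reflTransGen_of_reflTransGen_one_sub [DecidableEq n] {R : Type*} [Ring R]
    {B : Matrix n n R} {j s : n} (h : Relation.ReflTransGen (fun k l => (1 - B) l k ≠ 0) j s) :
    Relation.ReflTransGen (fun k l => B l k ≠ 0) j s := by
  refine h.lift' id fun k l hkl => ?_
  by_cases hlk : l = k
  · exact hlk ▸ .refl
  · exact .single (by simpa [one_apply_ne hlk] using hkl)

def supportedOnReachable {R : Type*} [Semiring R] (A : Matrix n n R) (j : n) :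
    Submodule R (n → R) :=
  Submodule.pi {i | ¬ Relation.ReflTransGen (fun k l => A l k ≠ 0) j i} fun _ => ⊥

theorem mulVec_mem_supportedOnReachable [Fintype n] {R : Type*} [Semiring R]
    {A : Matrix n n R} {j : n} {v : n → R} (hv : v ∈ A.supportedOnReachable j) :
    A *ᵥ v ∈ A.supportedOnReachable j := by
  simp only [supportedOnReachable, Submodule.mem_pi, Set.mem_ofPred_eq, Submodule.mem_bot]
    at hv ⊢
  intro l hl
  refine Finset.sum_eq_zero fun k _ => ?_
  by_cases hk : Relation.ReflTransGen (fun k l => A l k ≠ 0) j k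
  · have hAlk : A l k = 0 := by_contra fun h => hl (hk.tail h)
    simp [hAlk]
  · simp [hv k hk]

variable [Fintype n] [DecidableEq n] {K : Type*} [Field K]

theorem inv_mulVec_mem {A : Matrix n n K} {p : Submodule K (n → K)}
    (hp : ∀ v ∈ p, A *ᵥ v ∈ p) {v : n → K} (hv : v ∈ p) : A⁻¹ *ᵥ v ∈ p := by
  by_cases hA : IsUnit A
  · have hinj : Function.Injective A.mulVecLin := mulVec_injective_of_isUnit hA
    have hmap : p.map A.mulVecLin = p :=
      Submodule.eq_of_le_of_finrank_eq (Submodule.map_le_iff_le_comap.mpr hp)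
        (Submodule.equivMapOfInjective _ hinj p).finrank_eq.symm
    obtain ⟨w, hw, rfl⟩ := hmap.symm ▸ hv
    simpa [mulVec_mulVec, nonsing_inv_mul _ ((isUnit_iff_isUnit_det A).mp hA)] using hw
  · rw [nonsing_inv_apply_not_isUnit _ (mt (isUnit_iff_isUnit_det A).mpr hA), zero_mulVec]
    exact p.zero_mem

theorem inv_apply_eq_zero_of_not_reflTransGen {A : Matrix n n K} {j s : n}
    (h : ¬ Relation.ReflTransGen (fun k l => A l k ≠ 0) j s) : A⁻¹ s j = 0 := by
  have hj : Pi.single j 1 ∈ A.supportedOnReachable j := by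
    simp only [supportedOnReachable, Submodule.mem_pi, Set.mem_ofPred_eq, Submodule.mem_bot]
    intro i hi
    exact Pi.single_eq_of_ne (by rintro rfl; exact hi .refl) 1
  have hcol := inv_mulVec_mem (fun _ => mulVec_mem_supportedOnReachable) hj
  simp only [supportedOnReachable, Submodule.mem_pi, Set.mem_ofPred_eq, Submodule.mem_bot,
    mulVec_single_one] at hcol
  exact hcol s h

end Matrix

theorem ProbabilityTheory.iIndepFun.indepFun_sum_of_coeff_eq_zero {Ω ι κ : Type*}
    [MeasurableSpace Ω] {μ : Measure Ω} [Fintype ι] [DecidableEq ι] {f : ι → Ω → ℝ}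
    (hf : iIndepFun f μ) (hmeas : ∀ i, Measurable (f i)) (c : κ → ι → ℝ) {j : ι}
    (hc : ∀ s, c s j = 0) : IndepFun (f j) (fun ω s => ∑ k, c s k * f k ω) μ := by
  have hφ : Measurable fun v : ({j} : Finset ι) → ℝ => v ⟨j, Finset.mem_singleton_self j⟩ :=
    measurable_pi_apply _
  have hψ : Measurable fun (v : ({j}ᶜ : Finset ι) → ℝ) (s : κ) => ∑ k, c s k.1 * v k :=
    measurable_pi_lambda _ fun s =>
      Finset.measurable_sum _ fun k _ => (measurable_pi_apply k).const_mul _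
  have hsum : ∀ s ω, ∑ k, c s k * f k ω = ∑ k : ({j}ᶜ : Finset ι), c s k * f k ω := by
    intro s ω
    rw [Fintype.sum_eq_add_sum_compl j, hc, zero_mul, zero_add]
    exact (Finset.sum_coe_sort _ _).symm
  simp_rw [hsum]
  exact (hf.indepFun_finset {j} {j}ᶜ disjoint_compl_right hmeas).comp hφ hψ

theorem noise_indep_nondescendants_general
    (p : ℕ) (B : Matrix (Fin p) (Fin p) ℝ)
    (Ω : Type*) [MeasureSpace Ω] (μ : Measure Ω)
    (N : Ω → Fin p → ℝ)
    (hmeas : ∀ i, Measurable fun ω => N ω i)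
    (hindep : iIndepFun (fun i ω => N ω i) μ)
    (X : Ω → Fin p → ℝ) (hX : ∀ ω, X ω = (1 - B)⁻¹ *ᵥ N ω)
    (j : Fin p) (S : Finset (Fin p))
    -- every element of `S` is a non-descendant of `j`:
    (hS : ∀ s ∈ S, s ≠ j ∧ ¬ Relation.TransGen (fun k l => B l k ≠ 0) j s) :
    IndepFun (fun ω => N ω j) (fun ω (s : S) => X ω s) μ := by
  have hcol : ∀ s : S, (1 - B)⁻¹ s j = 0 := by
    intro s
    obtain ⟨hsj, hpath⟩ := hS s s.2
    refine inv_apply_eq_zero_of_not_reflTransGen fun h => ?_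
    rcases Relation.reflTransGen_iff_eq_or_transGen.mp
      (reflTransGen_of_reflTransGen_one_sub h) with h | h
    exacts [hsj h, hpath h]
  convert hindep.indepFun_sum_of_coeff_eq_zero hmeas (fun (s : S) k => (1 - B)⁻¹ s k) hcol
    using 2 with ω
  funext s
  simp [hX, mulVec, dotProduct]

/-- Let `X = (I-B)⁻¹ N` with `B` of acyclic support, the components of `N`
independent, and fix a vertex `j`. If `S` consists only of non-descendants of
`j` (in the graph with an edge `k → l` iff `B l k ≠ 0`), then the noise
variable `N_j` is independent of the subvector `X_S`. -/
theorem noise_indep_nondescendants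
    (p : ℕ) (B : Matrix (Fin p) (Fin p) ℝ)
    (hAdj : IsNilpotent (Matrix.of fun j k => if B j k ≠ 0 then (1 : ℝ) else 0))
    (Ω : Type*) [MeasureSpace Ω] (μ : Measure Ω) [IsProbabilityMeasure μ]
    (N : Ω → Fin p → ℝ)
    (hmeas : ∀ i, Measurable fun ω => N ω i)
    (hindep : iIndepFun (fun i ω => N ω i) μ)
    (X : Ω → Fin p → ℝ) (hX : ∀ ω, X ω = (1 - B)⁻¹ *ᵥ N ω)
    (j : Fin p) (S : Finset (Fin p))
    -- every element of `S` is a non-descendant of `j`: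
    (hS : ∀ s ∈ S, s ≠ j ∧ ¬ Relation.TransGen (fun k l => B l k ≠ 0) j s) :
    IndepFun (fun ω => N ω j) (fun ω (s : S) => X ω s) μ :=
  noise_indep_nondescendants_general p B Ω μ N hmeas hindep X hX j S hS
end

section
/- Let X be generated by a linear Gaussian SEM X = BX + N with acyclic B, independent Gaussian noises with positive variances, and all coefficients on edges nonzero. Let j be a vertex, k a parent of j, and S any set with Pa(j)\{k} ⊆ S ⊆ ND(j)\{k} (S contains all other parents of j and consists of non-descendants of j). Then X_j and X_k are conditionally dependent given X_S. -/
/-!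
Acyclicity (a nilpotent adjacency matrix) makes `1 - B` invertible with `(1 - B)⁻¹` supported on
pairs (descendant, ancestor), so the noise `N_j` is uncorrelated with every non-descendant of `j`:
on `S ∪ {k}` the row `Σ_j·` equals `∑ m, B_jm Σ_m·`. The partial covariance with `k` given `S` is
linear in that row and vanishes on the rows indexed by `S`; since every other parent of `j` lies in
`S`, it equals `B_jk` times the partial variance of `X_k` given `X_S`, which is positive because
`Σ = (1 - B)⁻¹ D (1 - B)⁻ᵀ` is positive definite.
-/

open Matrix Finset Relation

namespace LinearSEM

variable {n : Type*}

section Nonnegative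

variable [Fintype n] {R : Type*} [Semiring R] [PartialOrder R] [IsStrictOrderedRing R]
  {M : Matrix n n R}

lemma mul_apply_pos {P Q : Matrix n n R} (hP : ∀ a b, 0 ≤ P a b) (hQ : ∀ a b, 0 ≤ Q a b)
    {a b c : n} (hab : 0 < P a b) (hbc : 0 < Q b c) : 0 < (P * Q) a c :=
  (mul_pos hab hbc).trans_le <|
    single_le_sum (f := fun l => P a l * Q l c) (fun l _ => mul_nonneg (hP a l) (hQ l c))
      (mem_univ b)

variable [DecidableEq n]

lemma pow_apply_nonneg (hM : ∀ a b, 0 ≤ M a b) (m : ℕ) (a b : n) : 0 ≤ (M ^ m) a b := by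
  induction m generalizing b with
  | zero => by_cases h : a = b <;> simp [h, one_apply]
  | succ m ih =>
    rw [pow_succ, mul_apply]
    exact sum_nonneg fun l _ => mul_nonneg (ih l) (hM l b)

lemma exists_pow_apply_pos_of_transGen (hM : ∀ a b, 0 ≤ M a b) {x y : n}
    (h : TransGen (fun a b => 0 < M a b) x y) : ∃ m, 0 < m ∧ 0 < (M ^ m) x y := by
  induction h with
  | single hxy => exact ⟨1, one_pos, by simpa using hxy⟩
  | tail _ hbc ih =>
    obtain ⟨m, -, hm⟩ := ih
    refine ⟨m + 1, m.succ_pos, ?_⟩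
    rw [pow_succ]
    exact mul_apply_pos (pow_apply_nonneg hM m) hM hm hbc

lemma not_transGen_self_of_isNilpotent (hM : ∀ a b, 0 ≤ M a b) (hnil : IsNilpotent M) (x : n) :
    ¬ TransGen (fun a b => 0 < M a b) x x := by
  intro hcycle
  obtain ⟨m, hm, hpos⟩ := exists_pow_apply_pos_of_transGen hM hcycle
  obtain ⟨N, hN⟩ := hnil
  -- going around the cycle `t + 1` times is a closed walk of length `m * (t + 1)`
  have hwalk : ∀ t : ℕ, 0 < (M ^ (m * (t + 1))) x x := by
    intro t
    induction t with
    | zero => simpa using hpos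
    | succ t ih =>
      rw [show m * (t + 1 + 1) = m * (t + 1) + m by ring, pow_add]
      exact mul_apply_pos (pow_apply_nonneg hM _) (pow_apply_nonneg hM _) ih hpos
  have hzero : M ^ (m * (N + 1)) = 0 := pow_eq_zero_of_le (by nlinarith) hN
  simpa [hzero] using hwalk N

lemma isNilpotent_of_support_subset {K : Type*} [Semiring K] {B : Matrix n n K}
    (hM : ∀ a b, 0 ≤ M a b) (hBM : ∀ a b, B a b ≠ 0 → 0 < M a b) (hnil : IsNilpotent M) :
    IsNilpotent B := by
  have hpow : ∀ m a b, (B ^ m) a b ≠ 0 → 0 < (M ^ m) a b := by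
    intro m
    induction m with
    | zero =>
      intro a b h
      obtain rfl : a = b := by_contra fun hab => h (one_apply_ne hab)
      simp
    | succ m ih =>
      intro a c h
      rw [pow_succ', mul_apply] at h
      obtain ⟨b, -, hb⟩ := exists_ne_zero_of_sum_ne_zero h
      rw [pow_succ']
      exact mul_apply_pos hM (pow_apply_nonneg hM m)
        (hBM a b (left_ne_zero_of_mul hb)) (ih b c (right_ne_zero_of_mul hb))
  obtain ⟨N, hN⟩ := hnil
  exact ⟨N, ext fun a b => by_contra fun h => (hpow N a b h).ne' (by simp [hN])⟩

end Nonnegative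

section Walks

variable [Fintype n] [DecidableEq n]

lemma reflTransGen_of_pow_apply_ne_zero {K : Type*} [Semiring K] (B : Matrix n n K) {m : ℕ}
    {l j : n} (h : (B ^ m) l j ≠ 0) : ReflTransGen (fun a b => B b a ≠ 0) j l := by
  induction m generalizing l with
  | zero =>
    obtain rfl : l = j := by_contra fun hlj => h (one_apply_ne hlj)
    exact .refl
  | succ m ih =>
    rw [pow_succ', mul_apply] at h
    obtain ⟨a, -, ha⟩ := exists_ne_zero_of_sum_ne_zero h
    exact (ih (right_ne_zero_of_mul ha)).tail (left_ne_zero_of_mul ha)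

lemma inv_one_sub_eq_sum_pow {K : Type*} [CommRing K] {B : Matrix n n K} {N : ℕ}
    (hN : B ^ N = 0) :
    (1 - B)⁻¹ = ∑ i ∈ range N, B ^ i :=
  inv_eq_right_inv (by rw [mul_neg_geom_sum, hN, sub_zero])

lemma reflTransGen_of_inv_one_sub_apply_ne_zero {K : Type*} [CommRing K] {B : Matrix n n K}
    (hB : IsNilpotent B) {l j : n} (h : (1 - B)⁻¹ l j ≠ 0) :
    ReflTransGen (fun a b => B b a ≠ 0) j l := by
  obtain ⟨N, hN⟩ := hB
  rw [inv_one_sub_eq_sum_pow hN, Matrix.sum_apply] at h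
  obtain ⟨i, -, hi⟩ := exists_ne_zero_of_sum_ne_zero h
  exact reflTransGen_of_pow_apply_ne_zero B hi

end Walks

lemma _root_.Matrix.PosDef.isUnit_det_subtype [DecidableEq n] {Sig : Matrix n n ℝ}
    (hSig : Sig.PosDef) (S : Finset n) : IsUnit (of fun s t : S => Sig s t).det :=
  (hSig.submatrix (e := ((↑) : S → n)) Subtype.val_injective).det_pos.ne'.isUnit

section Residual

variable [Fintype n] [DecidableEq n] {K : Type*} [Field K] (Sig : Matrix n n K) (S : Finset n)
  (b : n)

/-- `e_b - Σ_SS⁻¹ Σ_Sb`, extended by zero off `S`: `Σ *ᵥ residualVector Σ S b` is the column of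
partial covariances with `b` given `S`. -/
noncomputable def residualVector : n → K :=
  Pi.single b 1 -
    ∑ s : S, ((of fun s t : S => Sig s t)⁻¹ *ᵥ fun s : S => Sig s b) s • Pi.single (s : n) 1

lemma dotProduct_residualVector (u : n → K) :
    u ⬝ᵥ residualVector Sig S b =
      u b - (fun s : S => u s) ⬝ᵥ ((of fun s t : S => Sig s t)⁻¹ *ᵥ fun s : S => Sig s b) := by
  simp only [residualVector, dotProduct_sub, dotProduct_sum, dotProduct_smul,
    dotProduct_single_one, smul_eq_mul]
  rw [dotProduct]
  simp_rw [mul_comm]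

lemma residualVector_self (hb : b ∉ S) : residualVector Sig S b b = 1 := by
  have hS : (fun s : S => (Pi.single b 1 : n → K) s) = 0 :=
    funext fun s => Pi.single_eq_of_ne (ne_of_mem_of_not_mem s.2 hb) 1
  simpa [hS] using dotProduct_residualVector Sig S b (Pi.single b 1)

variable {Sig S}

lemma mulVec_residualVector_of_mem (hS : IsUnit (of fun s t : S => Sig s t).det) {a : n}
    (ha : a ∈ S) : (Sig *ᵥ residualVector Sig S b) a = 0 := by
  have hrow : (fun s : S => Sig a s) = fun s => (of fun s t : S => Sig s t) ⟨a, ha⟩ s := rfl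
  rw [mulVec, dotProduct_residualVector, hrow, ← mulVec, mulVec_mulVec, mul_nonsing_inv _ hS,
    one_mulVec, sub_self]

lemma mul_mulVec_residualVector_apply (hS : IsUnit (of fun s t : S => Sig s t).det)
    (B : Matrix n n K) {j : n} (hB : ∀ m, B j m ≠ 0 → m ≠ b → m ∈ S) :
    ((B * Sig) *ᵥ residualVector Sig S b) j = B j b * (Sig *ᵥ residualVector Sig S b) b := by
  rw [← mulVec_mulVec, mulVec, dotProduct]
  refine sum_eq_single b (fun m _ hmb => ?_) (fun h => absurd (mem_univ b) h)
  by_cases hm : m ∈ S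
  · rw [mulVec_residualVector_of_mem b hS hm, mul_zero]
  · rw [show B j m = 0 from by_contra fun h => hm (hB m h hmb), zero_mul]

lemma _root_.Matrix.PosDef.mulVec_residualVector_self_pos {Sig : Matrix n n ℝ}
    (hSig : Sig.PosDef) (hb : b ∉ S) : 0 < (Sig *ᵥ residualVector Sig S b) b := by
  set v := residualVector Sig S b
  have hv : v ≠ 0 := fun h =>
    one_ne_zero ((residualVector_self Sig S b hb).symm.trans (congrFun h b))
  have hS : (fun s : S => (Sig *ᵥ v) s) = 0 :=
    funext fun s => mulVec_residualVector_of_mem b (hSig.isUnit_det_subtype S) s.2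
  calc 0 < v ⬝ᵥ (Sig *ᵥ v) := by simpa using hSig.dotProduct_mulVec_pos hv
    _ = (Sig *ᵥ v) b := by
      rw [dotProduct_comm, dotProduct_residualVector, hS, zero_dotProduct, sub_zero]

end Residual

section StructuralEquationModel

variable {B : Matrix n n ℝ}

noncomputable def adjacency (B : Matrix n n ℝ) : Matrix n n ℝ :=
  of fun j k => if B j k ≠ 0 then 1 else 0

lemma adjacency_nonneg (a b : n) : 0 ≤ adjacency B a b := by
  simp only [adjacency, of_apply]
  split_ifs <;> norm_num

lemma adjacency_pos_of_ne_zero {a b : n} (h : B a b ≠ 0) : 0 < adjacency B a b := by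
  simp [adjacency, h]

variable [Fintype n] [DecidableEq n]

lemma isNilpotent_of_isNilpotent_adjacency (h : IsNilpotent (adjacency B)) : IsNilpotent B :=
  isNilpotent_of_support_subset adjacency_nonneg (fun _ _ => adjacency_pos_of_ne_zero) h

lemma not_transGen_self_of_isNilpotent_adjacency (h : IsNilpotent (adjacency B)) (x : n) :
    ¬ TransGen (fun a b => B b a ≠ 0) x x := by
  rw [← transGen_swap]
  exact fun hcycle => not_transGen_self_of_isNilpotent adjacency_nonneg h x
    (TransGen.mono (fun _ _ => adjacency_pos_of_ne_zero) _ _ hcycle)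

/-- In `(1 - B) Σ = D (1 - B)⁻ᵀ`, the entry `(j, l)` is `Cov(N_j, X_l) = d_j ((1 - B)⁻¹)_{lj}`,
which vanishes unless `l` is `j` or a descendant of `j`. -/
lemma cov_apply_eq_of_not_descendant (hB : IsNilpotent B) (d : n → ℝ) {Sig : Matrix n n ℝ}
    (hSig : Sig = (1 - B)⁻¹ * diagonal d * ((1 - B)⁻¹)ᵀ) {j l : n} (hlj : l ≠ j)
    (hl : ¬ TransGen (fun a b => B b a ≠ 0) j l) : Sig j l = (B * Sig) j l := by
  have hdet : IsUnit (1 - B).det := (isUnit_iff_isUnit_det _).mp hB.isUnit_one_sub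
  have hA : (1 - B)⁻¹ l j = 0 := by_contra fun h =>
    (reflTransGen_iff_eq_or_transGen.mp (reflTransGen_of_inv_one_sub_apply_ne_zero hB h)).elim
      hlj hl
  have hnoise : ((1 - B) * Sig) j l = d j * (1 - B)⁻¹ l j := by
    rw [hSig, ← Matrix.mul_assoc, ← Matrix.mul_assoc, mul_nonsing_inv _ hdet, Matrix.one_mul,
      diagonal_mul, transpose_apply]
  rwa [hA, mul_zero, sub_mul, Matrix.one_mul, Matrix.sub_apply, sub_eq_zero] at hnoise

lemma posDef_cov (hB : IsNilpotent B) {d : n → ℝ} (hd : ∀ i, 0 < d i) :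
    ((1 - B)⁻¹ * diagonal d * ((1 - B)⁻¹)ᵀ).PosDef := by
  have hinj : Function.Injective (1 - B)⁻¹.vecMul :=
    vecMul_injective_iff_isUnit.mpr (isUnit_nonsing_inv_iff.mpr hB.isUnit_one_sub)
  simpa [conjTranspose_eq_transpose_of_trivial] using
    (PosDef.diagonal hd).mul_mul_conjTranspose_same hinj

end StructuralEquationModel

end LinearSEM

open LinearSEM

/-- Causal minimality for linear Gaussian SEMs: let `X = BX + N` with acyclic
`B`, independent Gaussian noises with positive variances `d i`, so that
`Cov(X) = Σ = (I-B)⁻¹ D (I-B)⁻ᵀ`. If `k` is a parent of `j` and `S` satisfies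
`Pa(j) \ {k} ⊆ S ⊆ ND(j) \ {k}`, then `X_j` and `X_k` are conditionally
dependent given `X_S`; for a Gaussian vector this means the partial covariance
`Σ_{jk} - Σ_{jS} Σ_{SS}⁻¹ Σ_{Sk}` is nonzero. -/
theorem conditional_dependence_on_parent
    (p : ℕ) (B : Matrix (Fin p) (Fin p) ℝ)
    (hAdj : IsNilpotent (Matrix.of fun j k => if B j k ≠ 0 then (1 : ℝ) else 0))
    (d : Fin p → ℝ) (hd : ∀ i, 0 < d i)
    (Sig : Matrix (Fin p) (Fin p) ℝ)
    (hSig : Sig = (1 - B)⁻¹ * Matrix.diagonal d * ((1 - B)⁻¹)ᵀ)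
    (j k : Fin p) (hk : B j k ≠ 0)
    (S : Finset (Fin p))
    (hPa : ∀ l, B j l ≠ 0 → l ≠ k → l ∈ S)
    (hND : ∀ s ∈ S, s ≠ k ∧ s ≠ j ∧ ¬ Relation.TransGen (fun a b => B b a ≠ 0) j s) :
    Sig j k - (fun s : S => Sig j s) ⬝ᵥ
        ((Matrix.of fun s t : S => Sig s t)⁻¹ *ᵥ fun s : S => Sig s k) ≠ 0 := by
  have hBnil : IsNilpotent B := isNilpotent_of_isNilpotent_adjacency hAdj
  have hacyclic := not_transGen_self_of_isNilpotent_adjacency hAdj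
  have hPD : Sig.PosDef := hSig ▸ posDef_cov hBnil hd
  have hrow : ∀ l ∈ insert k S, Sig j l = (B * Sig) j l := by
    simp only [mem_insert, forall_eq_or_imp]
    refine ⟨?_, fun l hlS => ?_⟩
    · exact cov_apply_eq_of_not_descendant hBnil d hSig
        (fun h => hacyclic j (.single (by rwa [h] at hk))) (fun h => hacyclic j (h.tail hk))
    · exact cov_apply_eq_of_not_descendant hBnil d hSig (hND l hlS).2.1 (hND l hlS).2.2
  -- the residual vector is supported on `insert k S`, where rows `j` of `Σ` and of `B Σ` agree
  have hresidual :
      Sig j ⬝ᵥ residualVector Sig S k = ((B * Sig) *ᵥ residualVector Sig S k) j := by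
    rw [mulVec, dotProduct_residualVector, dotProduct_residualVector, hrow k (mem_insert_self k S)]
    congr 2
    exact funext fun s => hrow s (mem_insert_of_mem s.2)
  rw [← dotProduct_residualVector, hresidual,
    mul_mulVec_residualVector_apply k (hPD.isUnit_det_subtype S) B hPa]
  exact mul_ne_zero hk (hPD.mulVec_residualVector_self_pos k fun h => (hND k h).1 rfl).ne'
end

section
/- Let Q be a p×p real orthogonal matrix that can be written as Q = (I−B')(I−B)⁻¹ where both B and B' have nilpotent adjacency matrices (acyclic supports). Then Q = I (and hence B = B'). -/
open Matrix

section Aux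

variable {p : ℕ}

/-- The 0/1 adjacency matrix of the support of `B`. -/
private noncomputable def adjm (B : Matrix (Fin p) (Fin p) ℝ) : Matrix (Fin p) (Fin p) ℝ :=
  Matrix.of fun j k => if B j k ≠ 0 then (1 : ℝ) else 0

private lemma adjm_nonneg (B : Matrix (Fin p) (Fin p) ℝ) (j k : Fin p) : 0 ≤ adjm B j k := by
  unfold adjm; simp only [Matrix.of_apply]; split <;> norm_num

private lemma pow_nonneg_apply {A : Matrix (Fin p) (Fin p) ℝ} (hA : ∀ j k, 0 ≤ A j k) :
    ∀ (n : ℕ) (j k : Fin p), 0 ≤ (A ^ n) j k := by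
  intro n
  induction n with
  | zero => intro j k; rw [pow_zero]; rw [Matrix.one_apply]; split <;> norm_num
  | succ n ih =>
      intro j k
      rw [pow_succ, Matrix.mul_apply]
      exact Finset.sum_nonneg fun m _ => mul_nonneg (ih j m) (hA m k)

private lemma pow_le_apply {A A' : Matrix (Fin p) (Fin p) ℝ}
    (h0 : ∀ j k, 0 ≤ A' j k) (hle : ∀ j k, A' j k ≤ A j k) :
    ∀ (n : ℕ) (j k : Fin p), (A' ^ n) j k ≤ (A ^ n) j k := by
  have hA0 : ∀ j k, 0 ≤ A j k := fun j k => le_trans (h0 j k) (hle j k)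
  intro n
  induction n with
  | zero => intro j k; rw [pow_zero, pow_zero]
  | succ n ih =>
      intro j k
      rw [pow_succ, pow_succ, Matrix.mul_apply, Matrix.mul_apply]
      refine Finset.sum_le_sum fun m _ => ?_
      exact mul_le_mul (ih j m) (hle m k) (h0 m k) (pow_nonneg_apply hA0 n j m)

/-- Nilpotency of adjacency matrices is monotone in the support. -/
private lemma adjm_nilpotent_mono {B B' : Matrix (Fin p) (Fin p) ℝ}
    (hsub : ∀ j k, B' j k ≠ 0 → B j k ≠ 0) (h : IsNilpotent (adjm B)) :
    IsNilpotent (adjm B') := by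
  obtain ⟨n, hn⟩ := h
  refine ⟨n, ?_⟩
  have hle : ∀ j k, adjm B' j k ≤ adjm B j k := by
    intro j k
    unfold adjm
    simp only [Matrix.of_apply]
    by_cases hb : B' j k ≠ 0
    · rw [if_pos hb, if_pos (hsub j k hb)]
    · rw [if_neg hb]; split <;> norm_num
  ext j k
  have h1 := pow_le_apply (adjm_nonneg B') hle n j k
  rw [hn] at h1
  have h2 := pow_nonneg_apply (adjm_nonneg B') n j k
  simp only [Matrix.zero_apply] at h1 ⊢
  linarith

private lemma diag_eq_zero {B : Matrix (Fin p) (Fin p) ℝ} (hAdj : IsNilpotent (adjm B))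
    (i : Fin p) : B i i = 0 := by
  by_contra hne
  have hA : adjm B i i = 1 := by unfold adjm; simp only [Matrix.of_apply]; rw [if_pos hne]
  have key : ∀ n : ℕ, 1 ≤ ((adjm B) ^ n) i i := by
    intro n
    induction n with
    | zero => rw [pow_zero, Matrix.one_apply_eq]
    | succ n ih =>
        rw [pow_succ, Matrix.mul_apply]
        calc (1:ℝ) ≤ ((adjm B) ^ n) i i * adjm B i i := by rw [hA, mul_one]; exact ih
        _ ≤ ∑ m, ((adjm B) ^ n) i m * adjm B m i :=
            Finset.single_le_sum
              (fun m _ => mul_nonneg (pow_nonneg_apply (adjm_nonneg B) n i m) (adjm_nonneg B m i))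
              (Finset.mem_univ i)
  obtain ⟨n, hn⟩ := hAdj
  have := key n
  rw [hn] at this
  simp at this
  linarith

private lemma nilpotent_of_adjm {B : Matrix (Fin p) (Fin p) ℝ} (hAdj : IsNilpotent (adjm B)) :
    IsNilpotent B := by
  obtain ⟨n, hn⟩ := hAdj
  set C : ℝ := ∑ j, ∑ k, |B j k| with hC
  have hC0 : 0 ≤ C := Finset.sum_nonneg fun j _ => Finset.sum_nonneg fun k _ => abs_nonneg _
  have hCb : ∀ j k, |B j k| ≤ C * adjm B j k := by
    intro j k
    by_cases hb : B j k ≠ 0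
    · have h1 : adjm B j k = 1 := by unfold adjm; simp only [Matrix.of_apply]; rw [if_pos hb]
      rw [h1, mul_one]
      calc |B j k| ≤ ∑ k', |B j k'| :=
            Finset.single_le_sum (f := fun k' => |B j k'|)
              (fun k' _ => abs_nonneg _) (Finset.mem_univ k)
        _ ≤ C := Finset.single_le_sum (f := fun j' => ∑ k', |B j' k'|)
            (fun j' _ => Finset.sum_nonneg fun k' _ => abs_nonneg _) (Finset.mem_univ j)
    · push_neg at hb
      rw [hb]
      simp [mul_nonneg hC0 (adjm_nonneg B j k)]
  have key : ∀ (m : ℕ) (j k : Fin p), |(B ^ m) j k| ≤ C ^ m * ((adjm B) ^ m) j k := by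
    intro m
    induction m with
    | zero =>
        intro j k
        rw [pow_zero, pow_zero, pow_zero, one_mul, Matrix.one_apply]
        split <;> simp
    | succ m ih =>
        intro j k
        calc |(B ^ (m+1)) j k| = |∑ l, (B ^ m) j l * B l k| := by
              rw [pow_succ, Matrix.mul_apply]
          _ ≤ ∑ l, |(B ^ m) j l * B l k| :=
              Finset.abs_sum_le_sum_abs _ _
          _ ≤ ∑ l, (C ^ m * ((adjm B) ^ m) j l) * (C * adjm B l k) := by
              refine Finset.sum_le_sum fun l _ => ?_
              rw [abs_mul]
              exact mul_le_mul (ih j l) (hCb l k) (abs_nonneg _)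
                (mul_nonneg (pow_nonneg hC0 m) (pow_nonneg_apply (adjm_nonneg B) m j l))
          _ = C ^ (m + 1) * ((adjm B) ^ (m + 1)) j k := by
              simp only [pow_succ, Matrix.mul_apply, Finset.mul_sum]
              exact Finset.sum_congr rfl fun l _ => by ring
  refine ⟨n, ?_⟩
  ext j k
  have := key n j k
  rw [hn] at this
  simp only [Matrix.zero_apply, mul_zero] at this
  simpa [abs_nonpos_iff] using this

private lemma exists_sink (B : Matrix (Fin p) (Fin p) ℝ) (hAdj : IsNilpotent (adjm B))
    (s : Finset (Fin p)) (hne : s.Nonempty) (hrow : ∀ j, j ∉ s → ∀ k, B j k = 0) :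
    ∃ i ∈ s, ∀ k, B k i = 0 := by
  by_contra hcon
  push_neg at hcon
  have H : ∀ i : Fin p, i ∈ s → ∃ k, k ∈ s ∧ B k i ≠ 0 := by
    intro i hi
    obtain ⟨k, hk⟩ := hcon i hi
    refine ⟨k, ?_, hk⟩
    by_contra hks
    exact hk (hrow k hks i)
  obtain ⟨i₀, h₀⟩ := hne
  set F : {i : Fin p // i ∈ s} → {i : Fin p // i ∈ s} :=
    fun x => ⟨(H x.1 x.2).choose, (H x.1 x.2).choose_spec.1⟩ with hFdef
  have hF : ∀ x : {i : Fin p // i ∈ s}, B (F x).1 x.1 ≠ 0 := fun x => (H x.1 x.2).choose_spec.2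
  set f : ℕ → {i : Fin p // i ∈ s} := fun n => F^[n] ⟨i₀, h₀⟩ with hfdef
  have hpos : ∀ n : ℕ, 0 < ((adjm B) ^ n) (f n).1 (f 0).1 := by
    intro n
    induction n with
    | zero => rw [pow_zero, Matrix.one_apply_eq]; norm_num
    | succ n ih =>
        have hfs : f (n + 1) = F (f n) := Function.iterate_succ_apply' F n _
        rw [pow_succ', Matrix.mul_apply]
        have hne1 : B (f (n+1)).1 (f n).1 ≠ 0 := by rw [hfs]; exact hF (f n)
        have hterm : 0 < adjm B (f (n+1)).1 (f n).1 * ((adjm B) ^ n) (f n).1 (f 0).1 := by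
          apply mul_pos _ ih
          unfold adjm
          simp only [Matrix.of_apply]
          rw [if_pos hne1]
          norm_num
        calc (0:ℝ) < adjm B (f (n+1)).1 (f n).1 * ((adjm B) ^ n) (f n).1 (f 0).1 := hterm
          _ ≤ ∑ m, adjm B (f (n+1)).1 m * ((adjm B) ^ n) m (f 0).1 :=
              Finset.single_le_sum
                (f := fun m => adjm B (f (n+1)).1 m * ((adjm B) ^ n) m (f 0).1)
                (fun m _ => mul_nonneg (adjm_nonneg B _ _) (pow_nonneg_apply (adjm_nonneg B) n _ _))
                (Finset.mem_univ (f n).1)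
  obtain ⟨n, hn⟩ := hAdj
  have := hpos n
  rw [hn] at this
  simp at this

private lemma key_lemma (s : Finset (Fin p)) :
    ∀ (B B' : Matrix (Fin p) (Fin p) ℝ),
      IsNilpotent (adjm B) → IsNilpotent (adjm B') →
      (∀ j, j ∉ s → ∀ k, B j k = 0) → (∀ j, j ∉ s → ∀ k, B' j k = 0) →
      (1 - B)ᵀ * (1 - B) = (1 - B')ᵀ * (1 - B') → B = B' := by
  induction s using Finset.strongInduction with
  | _ s ih =>
    intro B B' hA hA' hr hr' hΘ
    rcases s.eq_empty_or_nonempty with rfl | hne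
    · ext j k
      rw [hr j (by simp) k, hr' j (by simp) k]
    obtain ⟨i, his, hcol⟩ := exists_sink B hA s hne hr
    have hexp : ∀ C : Matrix (Fin p) (Fin p) ℝ,
        (1 - C)ᵀ * (1 - C) = 1 - C - Cᵀ + Cᵀ * C := by
      intro C; rw [Matrix.transpose_sub, Matrix.transpose_one]; noncomm_ring
    have hE : (1 : Matrix (Fin p) (Fin p) ℝ) - B - Bᵀ + Bᵀ * B
        = 1 - B' - B'ᵀ + B'ᵀ * B' := by
      rw [← hexp, ← hexp, hΘ]
    have hentry : ∀ j k : Fin p,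
        (1 : Matrix (Fin p) (Fin p) ℝ) j k - B j k - B k j + ∑ m, B m j * B m k
          = (1 : Matrix (Fin p) (Fin p) ℝ) j k - B' j k - B' k j + ∑ m, B' m j * B' m k := by
      intro j k
      have h := congrFun (congrFun hE j) k
      simpa only [Matrix.sub_apply, Matrix.add_apply, Matrix.mul_apply,
        Matrix.transpose_apply] using h
    have hBii := diag_eq_zero hA i
    have hB'ii := diag_eq_zero hA' i
    -- column i of B' is zero too
    have hcol' : ∀ k, B' k i = 0 := by
      have h := hentry i i
      rw [hBii, hB'ii] at h
      simp only [hcol, mul_zero, Finset.sum_const_zero] at h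
      have hsum : ∑ m, B' m i * B' m i = 0 := by linarith
      intro k
      have := (Finset.sum_eq_zero_iff_of_nonneg
        (fun m _ => mul_self_nonneg (B' m i))).mp hsum k (Finset.mem_univ k)
      exact mul_self_eq_zero.mp this
    -- rows i of B and B' agree
    have hrowi : ∀ k, B i k = B' i k := by
      intro k
      have h := hentry k i
      simp only [hcol, hcol', mul_zero, Finset.sum_const_zero] at h
      linarith
    -- the matrices with row i removed
    set B₂ : Matrix (Fin p) (Fin p) ℝ :=
      Matrix.of (fun j k => if j = i then 0 else B j k) with hB₂def
    set B'₂ : Matrix (Fin p) (Fin p) ℝ :=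
      Matrix.of (fun j k => if j = i then 0 else B' j k) with hB'₂def
    set E : Matrix (Fin p) (Fin p) ℝ :=
      Matrix.of (fun j k => if j = i then B i k else 0) with hEdef
    have hB₂i : ∀ j k, B₂ j k = if j = i then 0 else B j k := fun j k => rfl
    have hB'₂i : ∀ j k, B'₂ j k = if j = i then 0 else B' j k := fun j k => rfl
    have hEi : ∀ j k, E j k = if j = i then B i k else 0 := fun j k => rfl
    have hsplit : B = B₂ + E := by
      ext j k
      rw [Matrix.add_apply, hB₂i, hEi]
      by_cases h : j = i
      · subst h; simp
      · simp [h]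
    have hsplit' : B' = B'₂ + E := by
      ext j k
      rw [Matrix.add_apply, hB'₂i, hEi]
      by_cases h : j = i
      · subst h; simp [hrowi k]
      · simp [h]
    have hzE : B₂ᵀ * E = 0 := by
      ext j k
      rw [Matrix.mul_apply, Matrix.zero_apply]
      refine Finset.sum_eq_zero fun m _ => ?_
      rw [Matrix.transpose_apply, hB₂i, hEi]
      by_cases h : m = i <;> simp [h]
    have hzE2 : Eᵀ * B₂ = 0 := by
      ext j k
      rw [Matrix.mul_apply, Matrix.zero_apply]
      refine Finset.sum_eq_zero fun m _ => ?_
      rw [Matrix.transpose_apply, hB₂i, hEi]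
      by_cases h : m = i <;> simp [h]
    have hzE' : B'₂ᵀ * E = 0 := by
      ext j k
      rw [Matrix.mul_apply, Matrix.zero_apply]
      refine Finset.sum_eq_zero fun m _ => ?_
      rw [Matrix.transpose_apply, hB'₂i, hEi]
      by_cases h : m = i <;> simp [h]
    have hzE2' : Eᵀ * B'₂ = 0 := by
      ext j k
      rw [Matrix.mul_apply, Matrix.zero_apply]
      refine Finset.sum_eq_zero fun m _ => ?_
      rw [Matrix.transpose_apply, hB'₂i, hEi]
      by_cases h : m = i <;> simp [h]
    have hprod : Bᵀ * B = B₂ᵀ * B₂ + Eᵀ * E := by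
      rw [hsplit, Matrix.transpose_add, Matrix.add_mul, Matrix.mul_add, Matrix.mul_add,
        hzE, hzE2, add_zero, zero_add]
    have hprod' : B'ᵀ * B' = B'₂ᵀ * B'₂ + Eᵀ * E := by
      rw [hsplit', Matrix.transpose_add, Matrix.add_mul, Matrix.mul_add, Matrix.mul_add,
        hzE', hzE2', add_zero, zero_add]
    have hΘ₂ : (1 - B₂)ᵀ * (1 - B₂) = (1 - B'₂)ᵀ * (1 - B'₂) := by
      have h1 : (1 - B₂)ᵀ * (1 - B₂)
          = (1 - B - Bᵀ + Bᵀ * B) + E + Eᵀ - Eᵀ * E := by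
        rw [hexp B₂, hprod, hsplit, Matrix.transpose_add]
        abel
      have h2 : (1 - B'₂)ᵀ * (1 - B'₂)
          = (1 - B' - B'ᵀ + B'ᵀ * B') + E + Eᵀ - Eᵀ * E := by
        rw [hexp B'₂, hprod', hsplit', Matrix.transpose_add]
        abel
      rw [h1, h2, hE]
    have hA₂ : IsNilpotent (adjm B₂) := by
      refine adjm_nilpotent_mono (fun j k h => ?_) hA
      rw [hB₂i] at h
      by_cases hj : j = i
      · rw [if_pos hj] at h; exact absurd rfl h
      · rwa [if_neg hj] at h
    have hA'₂ : IsNilpotent (adjm B'₂) := by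
      refine adjm_nilpotent_mono (fun j k h => ?_) hA'
      rw [hB'₂i] at h
      by_cases hj : j = i
      · rw [if_pos hj] at h; exact absurd rfl h
      · rwa [if_neg hj] at h
    have hr₂ : ∀ j, j ∉ s.erase i → ∀ k, B₂ j k = 0 := by
      intro j hj k
      rw [hB₂i]
      by_cases h : j = i
      · rw [if_pos h]
      · rw [if_neg h]
        refine hr j (fun hjs => hj ?_) k
        exact Finset.mem_erase.mpr ⟨h, hjs⟩
    have hr'₂ : ∀ j, j ∉ s.erase i → ∀ k, B'₂ j k = 0 := by
      intro j hj k
      rw [hB'₂i]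
      by_cases h : j = i
      · rw [if_pos h]
      · rw [if_neg h]
        refine hr' j (fun hjs => hj ?_) k
        exact Finset.mem_erase.mpr ⟨h, hjs⟩
    have heq₂ : B₂ = B'₂ :=
      ih (s.erase i) (Finset.erase_ssubset his) B₂ B'₂ hA₂ hA'₂ hr₂ hr'₂ hΘ₂
    ext j k
    by_cases h : j = i
    · subst h; exact hrowi k
    · have := congrFun (congrFun heq₂ j) k
      rw [hB₂i, hB'₂i, if_neg h, if_neg h] at this
      exact this

end Aux

/-- An orthogonal matrix of the form `Q = (I - B')(I - B)⁻¹`, where both `B`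
and `B'` have nilpotent adjacency matrices (acyclic supports), is the identity;
hence `B = B'`. -/
theorem orthogonal_unipotent_eq_one
    (p : ℕ)
    (B B' Q : Matrix (Fin p) (Fin p) ℝ)
    (hAdj : IsNilpotent (Matrix.of fun j k => if B j k ≠ 0 then (1 : ℝ) else 0))
    (hAdj' : IsNilpotent (Matrix.of fun j k => if B' j k ≠ 0 then (1 : ℝ) else 0))
    (hQ : Q = (1 - B') * (1 - B)⁻¹)
    (horth : Qᵀ * Q = 1) :
    Q = 1 ∧ B = B' := by
  have hAdjB : IsNilpotent (adjm B) := hAdj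
  have hAdjB' : IsNilpotent (adjm B') := hAdj'
  have hNB : IsNilpotent B := nilpotent_of_adjm hAdjB
  have hu : IsUnit (1 - B) := hNB.isUnit_one_sub
  have hdet : IsUnit (1 - B).det := (Matrix.isUnit_iff_isUnit_det _).mp hu
  have hQB : Q * (1 - B) = 1 - B' := by
    rw [hQ, Matrix.mul_assoc, Matrix.nonsing_inv_mul _ hdet, Matrix.mul_one]
  have hΘ : (1 - B)ᵀ * (1 - B) = (1 - B')ᵀ * (1 - B') := by
    rw [← hQB, Matrix.transpose_mul, Matrix.mul_assoc, ← Matrix.mul_assoc Qᵀ Q, horth,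
      Matrix.one_mul]
  have hBB : B = B' := by
    refine key_lemma Finset.univ B B' hAdjB hAdjB' ?_ ?_ hΘ
    · intro j hj; exact absurd (Finset.mem_univ j) hj
    · intro j hj; exact absurd (Finset.mem_univ j) hj
  refine ⟨?_, hBB⟩
  rw [hQ, ← hBB]
  exact Matrix.mul_nonsing_inv _ hdet
end
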